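/- Let λ = (λ₁,λ₂,λ₃) ∈ ℂ³ with λ₁+λ₂+λ₃ = 0 and λᵢ−λⱼ ∉ 2ℤ for all i ≠ j. Then the six functions (y₁,y₂) ↦ M°_{wλ}(y₁,y₂) on (0,∞)², as w ranges over the six permutations of the coordinates (λ₁,λ₂,λ₃), are linearly independent over ℂ. -/

import Mathlib

/-!
In the variables `u = log (π y₁)`, `v = log (π y₂)` the function `M°_λ` becomes
`exp (a u + b v) · Ψ (e^{2u}, e^{2v})`, where `Ψ` is entire in each variable and, with
`s = λ₁ + λ₂ + λ₃`, `a = λ₁ - s/2` and `b = s/2 - λ₃`. A linear relation among the six `M°_{wλ}`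
therefore continues analytically to `ℂ²`. There the translations `u ↦ u + kπi`, `v ↦ v + jπi`
multiply the `w`-th term by `e^{πi k a_w} e^{πi j b_w}`; as `λᵢ - λⱼ ∉ 2ℤ`, the factor `e^{πi a_w}`
takes three distinct values according to `w 0`, and `e^{πi b_w}` according to `w 2`. Since
`(w 0, w 2)` determines `w`, a Vandermonde argument in `k` and in `j` makes every term of the
relation vanish separately. Finally `Ψ (0, 0)` is a product of three values `1/Γ(1 + (λᵢ - λⱼ)/2)`,
which are nonzero, so no `M°_{wλ}` vanishes identically.
-/

open scoped Real

noncomputable section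

/-- The modified Bessel function of the first kind (summand is 0 at poles of Γ). -/
def Ibessel (ν : ℂ) (x : ℝ) : ℂ :=
  ∑' n : ℕ, Complex.exp ((ν + 2 * (n : ℂ)) * (Real.log (x / 2) : ℂ)) /
    ((n.factorial : ℂ) * Complex.Gamma ((n : ℂ) + ν + 1))

/-- `M°_λ(y₁,y₂)`, the entire series of products of `I`-Bessel functions. -/
def Mcirc (l₁ l₂ l₃ : ℂ) (y₁ y₂ : ℝ) : ℂ :=
  ∑' m : ℕ,
    ((π * y₁ : ℝ) : ℂ) ^ ((m : ℂ) - l₃ / 2) * ((π * y₂ : ℝ) : ℂ) ^ ((m : ℂ) + l₁ / 2) /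
      ((m.factorial : ℂ) * Complex.Gamma ((m : ℂ) + (l₁ - l₃) / 2 + 1)) *
      Ibessel ((m : ℂ) + (l₁ - l₂) / 2) (2 * π * y₁) *
      Ibessel ((m : ℂ) + (l₂ - l₃) / 2) (2 * π * y₂)

open Complex Filter Topology
open scoped Nat

lemma exists_norm_inv_Gamma_add_nat_le (s : ℂ) : ∃ C, ∀ k : ℕ, ‖(Gamma (s + k))⁻¹‖ ≤ C := by
  obtain ⟨N, hN⟩ := exists_nat_ge (‖s‖ + 1)
  refine ⟨∑ k ∈ Finset.range (N + 1), ‖(Gamma (s + k))⁻¹‖, fun k => ?_⟩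
  have hle : ∀ k ≤ N, ‖(Gamma (s + k))⁻¹‖ ≤ ∑ k ∈ Finset.range (N + 1), ‖(Gamma (s + k))⁻¹‖ :=
    fun k hk => Finset.single_le_sum (f := fun k : ℕ => ‖(Gamma (s + k))⁻¹‖)
      (fun _ _ => norm_nonneg _) (Finset.mem_range.2 (Nat.lt_succ_of_le hk))
  induction k with
  | zero => exact hle 0 (Nat.zero_le N)
  | succ k ih =>
    rcases le_or_gt (k + 1) N with hk | hk
    · exact hle _ hk
    have hsk : 1 ≤ ‖s + k‖ := by
      have hk' : (N : ℝ) ≤ k := by exact_mod_cast Nat.le_of_lt_succ hk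
      have := norm_sub_norm_le (k : ℂ) (-s)
      rw [sub_neg_eq_add, add_comm, norm_neg, Complex.norm_natCast] at this
      linarith
    calc ‖(Gamma (s + (k + 1 : ℕ)))⁻¹‖ = ‖(Gamma (s + k))⁻¹‖ / ‖s + k‖ := by
          rw [Nat.cast_succ, ← add_assoc, Gamma_add_one _ (norm_pos_iff.1 (by linarith)),
            mul_inv, norm_mul, norm_inv, div_eq_mul_inv, mul_comm]
      _ ≤ ‖(Gamma (s + k))⁻¹‖ := div_le_self (norm_nonneg _) hsk
      _ ≤ _ := ih

lemma differentiable_tsum_of_forall_norm_le {f : ℕ → ℂ → ℂ} (hf : ∀ n, Differentiable ℂ (f n))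
    (hbound : ∀ R : ℝ, ∃ u : ℕ → ℝ, Summable u ∧ ∀ n z, ‖z‖ < R → ‖f n z‖ ≤ u n) :
    Differentiable ℂ fun z => ∑' n, f n z := by
  intro z
  obtain ⟨u, hu, hfu⟩ := hbound (‖z‖ + 1)
  have hz : z ∈ Metric.ball (0 : ℂ) (‖z‖ + 1) := by simp
  exact (differentiableOn_tsum_of_summable_norm hu (fun n => (hf n).differentiableOn)
    Metric.isOpen_ball fun n w hw => hfu n w (mem_ball_zero_iff.1 hw)).differentiableAt
    (Metric.isOpen_ball.mem_nhds hz)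

lemma norm_pow_div_factorial_mul_le {a z : ℂ} {C R : ℝ} (ha : ‖a‖ ≤ C) (hz : ‖z‖ ≤ R) (n : ℕ) :
    ‖z ^ n / n ! * a‖ ≤ C * (R ^ n / n !) := by
  rw [norm_mul, norm_div, norm_pow, Complex.norm_natCast, mul_comm]
  gcongr
  exact (norm_nonneg a).trans ha

def besselEntire (ν z : ℂ) : ℂ :=
  ∑' n : ℕ, z ^ n / n ! * (Gamma (n + ν + 1))⁻¹

lemma besselEntire_zero (ν : ℂ) : besselEntire ν 0 = (Gamma (ν + 1))⁻¹ := by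
  rw [besselEntire, tsum_eq_single 0 fun n hn => by simp [hn]]
  simp

lemma differentiable_besselEntire (ν : ℂ) : Differentiable ℂ (besselEntire ν) := by
  obtain ⟨C, hC⟩ := exists_norm_inv_Gamma_add_nat_le (ν + 1)
  refine differentiable_tsum_of_forall_norm_le (fun n => by fun_prop) fun R =>
    ⟨_, (Real.summable_pow_div_factorial R).mul_left C, fun n z hz =>
      norm_pow_div_factorial_mul_le ?_ hz.le n⟩
  rw [show (n : ℂ) + ν + 1 = ν + 1 + n by ring]
  exact hC n

lemma exists_norm_besselEntire_nat_add_le (σ : ℂ) :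
    ∃ C, ∀ (m : ℕ) (z : ℂ), ‖besselEntire (m + σ) z‖ ≤ C * Real.exp ‖z‖ := by
  obtain ⟨C, hC⟩ := exists_norm_inv_Gamma_add_nat_le (σ + 1)
  refine ⟨C, fun m z => ?_⟩
  rw [Real.exp_eq_exp_ℝ]
  refine tsum_of_norm_bounded ((NormedSpace.expSeries_div_hasSum_exp ‖z‖).mul_left C)
    fun n => norm_pow_div_factorial_mul_le ?_ le_rfl n
  rw [show (n : ℂ) + (m + σ) + 1 = σ + 1 + (n + m : ℕ) by push_cast; ring]
  exact hC _

def McircSeries (α β x y : ℂ) : ℂ :=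
  ∑' m : ℕ, (x * y) ^ m / m ! *
    ((Gamma (m + α + β + 1))⁻¹ * besselEntire (m + α) x * besselEntire (m + β) y)

lemma exists_norm_McircSeries_term_le (α β : ℂ) :
    ∃ C, ∀ (m : ℕ) (x y : ℂ) (R S : ℝ), ‖x‖ ≤ R → ‖y‖ ≤ S →
      ‖(x * y) ^ m / m ! *
        ((Gamma (m + α + β + 1))⁻¹ * besselEntire (m + α) x * besselEntire (m + β) y)‖ ≤
      C * Real.exp R * Real.exp S * ((R * S) ^ m / m !) := by
  obtain ⟨C₁, hC₁⟩ := exists_norm_inv_Gamma_add_nat_le (α + β + 1)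
  obtain ⟨C₂, hC₂⟩ := exists_norm_besselEntire_nat_add_le α
  obtain ⟨C₃, hC₃⟩ := exists_norm_besselEntire_nat_add_le β
  have hC₁0 : 0 ≤ C₁ := (norm_nonneg _).trans (hC₁ 0)
  refine ⟨C₁ * C₂ * C₃, fun m x y R S hx hy =>
    norm_pow_div_factorial_mul_le ?_ (norm_mul_le_of_le hx hy) m⟩
  have hΓ : ‖(Gamma (m + α + β + 1))⁻¹‖ ≤ C₁ := by
    rw [show (m : ℂ) + α + β + 1 = α + β + 1 + m by ring]
    exact hC₁ m
  have hC₂0 : 0 ≤ C₂ := by simpa using (norm_nonneg _).trans (hC₂ 0 0)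
  have hC₃0 : 0 ≤ C₃ := by simpa using (norm_nonneg _).trans (hC₃ 0 0)
  have hx' : ‖besselEntire (m + α) x‖ ≤ C₂ * Real.exp R := (hC₂ m x).trans (by gcongr)
  have hy' : ‖besselEntire (m + β) y‖ ≤ C₃ * Real.exp S := (hC₃ m y).trans (by gcongr)
  rw [norm_mul, norm_mul]
  calc _ ≤ C₁ * (C₂ * Real.exp R) * (C₃ * Real.exp S) := by gcongr
    _ = _ := by ring

lemma differentiable_McircSeries_left (α β y : ℂ) :
    Differentiable ℂ fun x => McircSeries α β x y := by
  obtain ⟨C, hC⟩ := exists_norm_McircSeries_term_le α β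
  exact differentiable_tsum_of_forall_norm_le
    (fun m => by have := differentiable_besselEntire (m + α); fun_prop) fun R =>
    ⟨_, (Real.summable_pow_div_factorial _).mul_left (C * Real.exp R * Real.exp ‖y‖),
      fun m x hx => hC m x y R ‖y‖ hx.le le_rfl⟩

lemma differentiable_McircSeries_diag (α β : ℂ) :
    Differentiable ℂ fun x => McircSeries α β x x := by
  obtain ⟨C, hC⟩ := exists_norm_McircSeries_term_le α β
  exact differentiable_tsum_of_forall_norm_le
    (fun m => by
      have := differentiable_besselEntire (m + α)
      have := differentiable_besselEntire (m + β)
      fun_prop) fun R =>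
    ⟨_, (Real.summable_pow_div_factorial _).mul_left (C * Real.exp R * Real.exp R),
      fun m x hx => hC m x x R R hx.le hx.le⟩

lemma McircSeries_comm (α β x y : ℂ) : McircSeries α β x y = McircSeries β α y x := by
  unfold McircSeries
  congr 1
  ext m
  rw [add_right_comm _ β α]
  ring

lemma differentiable_McircSeries_right (α β x : ℂ) : Differentiable ℂ (McircSeries α β x) := by
  simpa only [McircSeries_comm β α] using differentiable_McircSeries_left β α x

lemma McircSeries_zero_zero (α β : ℂ) :
    McircSeries α β 0 0 = (Gamma (α + β + 1))⁻¹ * (Gamma (α + 1))⁻¹ * (Gamma (β + 1))⁻¹ := by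
  rw [McircSeries, tsum_eq_single 0 fun m hm => by simp [hm]]
  simp [besselEntire_zero]

lemma Ibessel_eq_exp_mul_besselEntire (ν : ℂ) (x : ℝ) :
    Ibessel ν x = exp (ν * Real.log (x / 2)) * besselEntire ν (exp (2 * Real.log (x / 2))) := by
  rw [Ibessel, besselEntire, ← tsum_mul_left]
  congr 1
  ext n
  rw [show (ν + 2 * n) * Real.log (x / 2) = ν * Real.log (x / 2) + n * (2 * Real.log (x / 2))
    by ring, exp_add, exp_nat_mul, div_eq_mul_inv, mul_inv]
  ring

/-- `M°_λ` in the variables `u = log (π y₁)`, `v = log (π y₂)`, continued to `ℂ²`. -/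
def McircLog (l₁ l₂ l₃ u v : ℂ) : ℂ :=
  exp ((l₁ - l₂ - l₃) / 2 * u + (l₁ + l₂ - l₃) / 2 * v) *
    McircSeries ((l₁ - l₂) / 2) ((l₂ - l₃) / 2) (exp (2 * u)) (exp (2 * v))

lemma Mcirc_exp_div_pi (l₁ l₂ l₃ : ℂ) (u v : ℝ) :
    Mcirc l₁ l₂ l₃ (Real.exp u / π) (Real.exp v / π) = McircLog l₁ l₂ l₃ u v := by
  have hπ (t : ℝ) : π * (Real.exp t / π) = Real.exp t := mul_div_cancel₀ _ Real.pi_ne_zero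
  have hlog (t : ℝ) : Real.log (2 * π * (Real.exp t / π) / 2) = t := by
    rw [mul_assoc, hπ, mul_div_cancel_left₀ _ two_ne_zero, Real.log_exp]
  have hcpow (t : ℝ) (s : ℂ) : ((Real.exp t : ℝ) : ℂ) ^ s = exp (t * s) := by
    rw [cpow_def_of_ne_zero (ofReal_ne_zero.2 (Real.exp_pos t).ne'),
      ← ofReal_log (Real.exp_pos t).le, Real.log_exp]
  simp only [Mcirc, McircLog, McircSeries, Ibessel_eq_exp_mul_besselEntire, hπ, hlog, hcpow,
    ← tsum_mul_left]
  congr 1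
  ext m
  rw [show (m : ℂ) + (l₁ - l₂) / 2 + (l₂ - l₃) / 2 + 1 = m + (l₁ - l₃) / 2 + 1 by ring,
    ← exp_add (2 * (u : ℂ)), ← exp_nat_mul]
  have hexp : exp (u * (m - l₃ / 2)) * exp (v * (m + l₁ / 2)) *
      exp ((m + (l₁ - l₂) / 2) * u) * exp ((m + (l₂ - l₃) / 2) * v) =
      exp ((l₁ - l₂ - l₃) / 2 * u + (l₁ + l₂ - l₃) / 2 * v) * exp (m * (2 * u + 2 * v)) := by
    simp only [← exp_add]
    ring_nf
  linear_combination (besselEntire (m + (l₁ - l₂) / 2) (exp (2 * u)) *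
    besselEntire (m + (l₂ - l₃) / 2) (exp (2 * v)) /
    (m ! * Gamma (m + (l₁ - l₃) / 2 + 1))) * hexp

lemma differentiable_McircLog_left (l₁ l₂ l₃ v : ℂ) :
    Differentiable ℂ fun u => McircLog l₁ l₂ l₃ u v := by
  have := differentiable_McircSeries_left ((l₁ - l₂) / 2) ((l₂ - l₃) / 2) (exp (2 * v))
  unfold McircLog
  fun_prop

lemma differentiable_McircLog_right (l₁ l₂ l₃ u : ℂ) : Differentiable ℂ (McircLog l₁ l₂ l₃ u) := by
  have := differentiable_McircSeries_right ((l₁ - l₂) / 2) ((l₂ - l₃) / 2) (exp (2 * u))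
  unfold McircLog
  fun_prop

lemma McircLog_add_pi_mul_I (l₁ l₂ l₃ u v : ℂ) (k j : ℕ) :
    McircLog l₁ l₂ l₃ (u + k * (π * I)) (v + j * (π * I)) =
      exp (π * I * ((l₁ - l₂ - l₃) / 2)) ^ k * exp (π * I * ((l₁ + l₂ - l₃) / 2)) ^ j *
        McircLog l₁ l₂ l₃ u v := by
  have hper (z : ℂ) (n : ℕ) : exp (2 * (z + n * (π * I))) = exp (2 * z) := by
    rw [mul_add, exp_add, show 2 * (n * (π * I)) = n * (2 * π * I) by ring,
      exp_nat_mul_two_pi_mul_I, mul_one]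
  rw [McircLog, McircLog, hper, hper]
  simp only [← exp_nat_mul, ← mul_assoc, ← exp_add]
  congr 2
  ring

lemma eq_zero_of_forall_ofReal_eq_zero {f : ℂ → ℂ} (hf : Differentiable ℂ f)
    (h : ∀ x : ℝ, f x = 0) (z : ℂ) : f z = 0 := by
  have hfreq : ∃ᶠ w in 𝓝[≠] (0 : ℂ), f w = 0 := by
    simpa using (continuous_ofReal.continuousWithinAt (s := {0}ᶜ) (x := 0).tendsto_nhdsWithin
      fun _ _ => by simp_all).frequently (Frequently.of_forall h)
  have hf' : AnalyticOnNhd ℂ f Set.univ := hf.differentiableOn.analyticOnNhd isOpen_univ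
  exact hf'.eqOn_zero_of_preconnected_of_frequently_eq_zero isPreconnected_univ (Set.mem_univ 0)
    hfreq (Set.mem_univ z)

lemma eq_zero_of_forall_ofReal_ofReal_eq_zero {f : ℂ → ℂ → ℂ}
    (h₁ : ∀ v, Differentiable ℂ fun u => f u v) (h₂ : ∀ u, Differentiable ℂ (f u))
    (h : ∀ x y : ℝ, f x y = 0) (u v : ℂ) : f u v = 0 :=
  eq_zero_of_forall_ofReal_eq_zero (h₂ u)
    (fun y => eq_zero_of_forall_ofReal_eq_zero (h₁ y) (fun x => h x y) u) v

lemma eq_zero_of_forall_sum_mul_pow_mul_pow_eq_zero {R ι : Type*} [CommRing R] [IsDomain R]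
    [Fintype ι] {n : ℕ} {A B : Fin n → R} (hA : Function.Injective A)
    (hB : Function.Injective B) {p q : ι → Fin n} (hpq : Function.Injective fun i => (p i, q i))
    {d : ι → R} (h : ∀ k j : Fin n, ∑ i, d i * A (p i) ^ (k : ℕ) * B (q i) ^ (j : ℕ) = 0) :
    d = 0 := by
  set D : Fin n → Fin n → R := fun a b => ∑ i, if p i = a ∧ q i = b then d i else 0
  have hD : ∀ k j : Fin n, ∑ a, (∑ b, D a b * B b ^ (j : ℕ)) * A a ^ (k : ℕ) = 0 := by
    intro k j
    rw [← h k j]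
    simp only [D, Finset.sum_mul, ite_mul, zero_mul, ite_and]
    rw [Finset.sum_congr rfl fun a _ => Finset.sum_comm, Finset.sum_comm]
    refine Finset.sum_congr rfl fun i _ => ?_
    simp [Finset.sum_ite_irrel, Finset.sum_ite_eq, mul_right_comm]
  have hrow (j : Fin n) : (fun a => ∑ b, D a b * B b ^ (j : ℕ)) = 0 :=
    Matrix.eq_zero_of_forall_pow_sum_mul_pow_eq_zero hA fun k => hD k j
  have hD0 (a : Fin n) : D a = 0 :=
    Matrix.eq_zero_of_forall_pow_sum_mul_pow_eq_zero hB fun j => congrFun (hrow j) a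
  funext i
  have := congrFun (hD0 (p i)) (q i)
  simp only [D, Pi.zero_apply] at this
  rwa [Finset.sum_eq_single i (fun i' _ hi' => if_neg fun h => hi' (hpq (Prod.ext h.1 h.2)))
    (by simp), if_pos ⟨rfl, rfl⟩] at this

def shiftFactor (l : Fin 3 → ℂ) (i : Fin 3) : ℂ :=
  exp (π * I * (l i - (l 0 + l 1 + l 2) / 2))

lemma shiftFactor_injective {l : Fin 3 → ℂ}
    (hgen : ∀ i j : Fin 3, i ≠ j → ∀ n : ℤ, l i - l j ≠ 2 * n) :
    Function.Injective (shiftFactor l) := by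
  intro i j hij
  by_contra hne
  obtain ⟨n, hn⟩ := exp_eq_exp_iff_exists_int.1 hij
  have hπI : (π : ℂ) * I ≠ 0 := mul_ne_zero (ofReal_ne_zero.2 Real.pi_ne_zero) I_ne_zero
  exact hgen i j hne n (mul_left_cancel₀ hπI (by linear_combination hn))

lemma McircLog_perm_add_pi_mul_I (l : Fin 3 → ℂ) (w : Equiv.Perm (Fin 3)) (u v : ℂ) (k j : ℕ) :
    McircLog (l (w 0)) (l (w 1)) (l (w 2)) (u + k * (π * I)) (v + j * (π * I)) =
      McircLog (l (w 0)) (l (w 1)) (l (w 2)) u v * shiftFactor l (w 0) ^ k *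
        (shiftFactor l (w 2))⁻¹ ^ j := by
  have hs : l (w 0) + l (w 1) + l (w 2) = l 0 + l 1 + l 2 := by
    simpa only [Fin.sum_univ_three] using Equiv.sum_comp w l
  rw [McircLog_add_pi_mul_I, shiftFactor, shiftFactor, ← exp_neg, ← hs]
  ring_nf

lemma Gamma_sub_div_two_add_one_ne_zero {a b : ℂ} (h : ∀ n : ℤ, a - b ≠ 2 * n) :
    Gamma ((a - b) / 2 + 1) ≠ 0 :=
  Gamma_ne_zero fun m hm => h (-(m + 1)) (by push_cast; linear_combination 2 * hm)

lemma exists_McircLog_diag_ne_zero {l₁ l₂ l₃ : ℂ} (h₁₂ : ∀ n : ℤ, l₁ - l₂ ≠ 2 * n)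
    (h₂₃ : ∀ n : ℤ, l₂ - l₃ ≠ 2 * n) (h₁₃ : ∀ n : ℤ, l₁ - l₃ ≠ 2 * n) :
    ∃ u : ℂ, McircLog l₁ l₂ l₃ u u ≠ 0 := by
  have h0 : McircSeries ((l₁ - l₂) / 2) ((l₂ - l₃) / 2) 0 0 ≠ 0 := by
    rw [McircSeries_zero_zero, show (l₁ - l₂) / 2 + (l₂ - l₃) / 2 = (l₁ - l₃) / 2 by ring]
    exact mul_ne_zero (mul_ne_zero (inv_ne_zero (Gamma_sub_div_two_add_one_ne_zero h₁₃))
      (inv_ne_zero (Gamma_sub_div_two_add_one_ne_zero h₁₂)))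
      (inv_ne_zero (Gamma_sub_div_two_add_one_ne_zero h₂₃))
  have hexp : Tendsto (fun t : ℝ => exp (2 * t)) atBot (𝓝 0) := by
    refine ((continuous_ofReal.tendsto 0).comp
      (Real.tendsto_exp_atBot.comp (tendsto_id.const_mul_atBot two_pos))).congr fun t => ?_
    simp [ofReal_exp]
  obtain ⟨t, ht⟩ := (((differentiable_McircSeries_diag _ _).continuous.tendsto 0).comp hexp
    |>.eventually_ne h0).exists
  exact ⟨t, mul_ne_zero (exp_ne_zero _) ht⟩

theorem statement18_general (l : Fin 3 → ℂ)
    (hgen : ∀ i j : Fin 3, i ≠ j → ∀ n : ℤ, l i - l j ≠ 2 * n) :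
    ∀ c : Equiv.Perm (Fin 3) → ℂ,
      (∀ y₁ y₂ : ℝ, 0 < y₁ → 0 < y₂ →
        ∑ w : Equiv.Perm (Fin 3), c w * Mcirc (l (w 0)) (l (w 1)) (l (w 2)) y₁ y₂ = 0) →
      ∀ w : Equiv.Perm (Fin 3), c w = 0 := by
  intro c hc
  have hrel : ∀ u v : ℂ, ∑ w, c w * McircLog (l (w 0)) (l (w 1)) (l (w 2)) u v = 0 := by
    refine eq_zero_of_forall_ofReal_ofReal_eq_zero (fun v => ?_) (fun u => ?_) fun x y => ?_
    · have := fun w : Equiv.Perm (Fin 3) =>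
        differentiable_McircLog_left (l (w 0)) (l (w 1)) (l (w 2)) v
      fun_prop
    · have := fun w : Equiv.Perm (Fin 3) =>
        differentiable_McircLog_right (l (w 0)) (l (w 1)) (l (w 2)) u
      fun_prop
    · simpa only [Mcirc_exp_div_pi] using
        hc (Real.exp x / π) (Real.exp y / π) (by positivity) (by positivity)
  have hterm (u v : ℂ) : (fun w => c w * McircLog (l (w 0)) (l (w 1)) (l (w 2)) u v) = 0 := by
    refine eq_zero_of_forall_sum_mul_pow_mul_pow_eq_zero (shiftFactor_injective hgen)
      (inv_injective.comp (shiftFactor_injective hgen)) (p := fun w => w 0) (q := fun w => w 2)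
      (by decide) fun k j => ?_
    simpa only [McircLog_perm_add_pi_mul_I, mul_assoc, Function.comp_apply] using
      hrel (u + k * (π * I)) (v + j * (π * I))
  intro w
  have hgen' {i j : Fin 3} (hij : i ≠ j) := hgen (w i) (w j) (w.injective.ne hij)
  obtain ⟨u, hu⟩ := exists_McircLog_diag_ne_zero (hgen' (by decide : (0 : Fin 3) ≠ 1))
    (hgen' (by decide : (1 : Fin 3) ≠ 2)) (hgen' (by decide : (0 : Fin 3) ≠ 2))
  exact (mul_eq_zero.1 (congrFun (hterm u u) w)).resolve_right hu

theorem statement18 (l : Fin 3 → ℂ) (hsum : l 0 + l 1 + l 2 = 0)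
    (hgen : ∀ i j : Fin 3, i ≠ j → ∀ n : ℤ, l i - l j ≠ 2 * n) :
    ∀ c : Equiv.Perm (Fin 3) → ℂ,
      (∀ y₁ y₂ : ℝ, 0 < y₁ → 0 < y₂ →
        ∑ w : Equiv.Perm (Fin 3), c w * Mcirc (l (w 0)) (l (w 1)) (l (w 2)) y₁ y₂ = 0) →
      ∀ w : Equiv.Perm (Fin 3), c w = 0 :=
  statement18_general l hgen
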